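/- arXiv:2108.01994 — 2 statements merged into one kernel-verified Lean document; each statement's English description precedes it below -/
import Mathlib

section
/- Minimality of G_κ: let κ be a staging of 𝕏 and let G = ({1, …, p}, F) be any DAG all of whose edges (j, i) satisfy j < i (so that 1, …, p is a topological order of G). If M_κ ⊆ M_G, then every edge of G_κ is an edge of G, i.e. F_{G_κ} ⊆ F. -/
open scoped Classical

/-- Full configurations of the `p` variables `X 0, …, X (p-1)`. -/
abbrev Cfg {p : ℕ} (X : Fin p → Type) : Type := ∀ j : Fin p, X j

/-- Prefixes of length `i`: assignments of values to the first `i` variables. -/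
abbrev Pref {p : ℕ} (X : Fin p → Type) (i : ℕ) : Type :=
  ∀ j : Fin p, (j : ℕ) < i → X j

/-- The full configuration `y` extends the prefix `x`. -/
def Agrees {p : ℕ} {X : Fin p → Type} {i : ℕ} (y : Cfg X) (x : Pref X i) : Prop :=
  ∀ (j : Fin p) (h : (j : ℕ) < i), y j = x j h

/-- The probability (under the mass function `P`) that the first `i` variables take the
values prescribed by the prefix `x`. -/
noncomputable def prefProb {p : ℕ} {X : Fin p → Type} [∀ j, Fintype (X j)]
    (P : Cfg X → ℝ) {i : ℕ} (x : Pref X i) : ℝ :=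
  ∑ y : Cfg X, if Agrees y x then P y else 0

/-- The conditional probability `P(X_{i+1} = z | (X_1, …, X_i) = x)` (with `i` zero-based:
the variable indexed by `i : Fin p` given the values `x` of the preceding variables). -/
noncomputable def condProb {p : ℕ} {X : Fin p → Type} [∀ j, Fintype (X j)]
    (P : Cfg X → ℝ) (i : Fin p) (x : Pref X i.1) (z : X i) : ℝ :=
  (∑ y : Cfg X, if Agrees y x ∧ y i = z then P y else 0) / prefProb P x

/-- Membership in the staged tree model `M_κ` of the staging `κ`: `P` is a strictly positive
probability mass function whose conditional distributions coincide on vertices in the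
same stage, at every level `i ∈ {1, …, p-1}` (zero-based: `1 ≤ i < p`). -/
def MemStagedModel {p : ℕ} {X : Fin p → Type} [∀ j, Fintype (X j)] {C : Type*}
    (κ : (i : Fin p) → Pref X i.1 → C) (P : Cfg X → ℝ) : Prop :=
  (∀ y : Cfg X, 0 < P y) ∧ (∑ y : Cfg X, P y = 1) ∧
    ∀ i : Fin p, 1 ≤ (i : ℕ) → ∀ x x' : Pref X i.1, κ i x = κ i x' →
      ∀ z : X i, condProb P i x z = condProb P i x' z

/-- Membership in the Bayesian network model `M_G` of a DAG on `{1, …, p}` whose edges all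
point from lower to higher indices; the DAG is encoded by its edge relation `E`
(`E j i` means there is an edge from `j` to `i`, i.e. `j` is a parent of `i`). -/
def MemBNModel {p : ℕ} {X : Fin p → Type} [∀ j, Fintype (X j)]
    (E : Fin p → Fin p → Prop) (P : Cfg X → ℝ) : Prop :=
  (∀ y : Cfg X, 0 ≤ P y) ∧ (∑ y : Cfg X, P y = 1) ∧
    ∃ g : (i : Fin p) → X i → ((j : Fin p) → E j i → X j) → ℝ,
      (∀ (i : Fin p) (z : X i) (par : (j : Fin p) → E j i → X j),
        g i z par ∈ Set.Ioo (0 : ℝ) 1) ∧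
      (∀ (i : Fin p) (par : (j : Fin p) → E j i → X j), ∑ z : X i, g i z par = 1) ∧
      (∀ y : Cfg X, P y = ∏ i : Fin p, g i (y i) (fun j _ => y j))

/-- The edge relation of the DAG `G_κ` associated to a staging `κ`: there is an edge
from `k` to `i` iff `k < i` and there are two prefixes of length `i` differing only in
coordinate `k` that receive different colors. -/
def stagingEdge {p : ℕ} {X : Fin p → Type} {C : Type*}
    (κ : (i : Fin p) → Pref X i.1 → C) (k i : Fin p) : Prop :=
  (k : ℕ) < (i : ℕ) ∧ ∃ x x' : Pref X i.1,
    (∀ (j : Fin p) (h : (j : ℕ) < (i : ℕ)), j ≠ k → x j h = x' j h) ∧ κ i x ≠ κ i x'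

/-- The staging `κ^G` induced by a DAG with edge relation `E` (all of whose edges point
from lower to higher indices): the color of a prefix of length `i` is its projection onto
the parent coordinates of vertex `i`. -/
def indStaging {p : ℕ} {X : Fin p → Type} (E : Fin p → Fin p → Prop)
    (hE : ∀ k i : Fin p, E k i → (k : ℕ) < (i : ℕ)) :
    (i : Fin p) → Pref X i.1 → ((i : Fin p) × ((j : Fin p) → E j i → X j)) :=
  fun i x => ⟨i, fun j h => x j (hE j i h)⟩

section Aux

variable {p : ℕ} {X : Fin p → Type} [∀ j, Fintype (X j)]

noncomputable def prodP (f : (j : Fin p) → X j → Pref X j.1 → ℝ) : Cfg X → ℝ :=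
  fun y => ∏ j : Fin p, f j (y j) (fun k _ => y k)

def extPref {m : ℕ} (x : Pref X m) (hm : m < p) (z : X ⟨m, hm⟩) : Pref X (m + 1) :=
  fun j h => if h' : (j : ℕ) < m then x j h' else
    cast (congrArg X (Fin.ext (show ((⟨m, hm⟩ : Fin p) : ℕ) = (j : ℕ) by
      simp only [Fin.val_mk]; omega))) z

lemma agrees_extPref {m : ℕ} (x : Pref X m) (hm : m < p) (z : X ⟨m, hm⟩) (y : Cfg X) :
    Agrees y (extPref x hm z) ↔ Agrees y x ∧ y ⟨m, hm⟩ = z := by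
  constructor
  · intro h
    refine ⟨fun j hj => ?_, ?_⟩
    · have := h j (by omega)
      rwa [extPref, dif_pos hj] at this
    · have := h ⟨m, hm⟩ (Nat.lt_succ_self m)
      rw [extPref, dif_neg (Nat.lt_irrefl m)] at this
      exact this.trans (cast_eq _ z)
  · rintro ⟨h1, h2⟩ j hj
    rw [extPref]
    by_cases h' : (j : ℕ) < m
    · rw [dif_pos h']
      exact h1 j h'
    · rw [dif_neg h']
      have hje : j = ⟨m, hm⟩ := Fin.ext (by simp only [Fin.val_mk]; omega)
      subst hje
      rw [h2]
      exact (cast_eq _ z).symm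

noncomputable def partProd (f : (j : Fin p) → X j → Pref X j.1 → ℝ)
    (m : ℕ) (x : Pref X m) : ℝ :=
  ∏ j : Fin p, if h : (j : ℕ) < m then f j (x j h) (fun k hk => x k (hk.trans h)) else 1

lemma partProd_ext (f : (j : Fin p) → X j → Pref X j.1 → ℝ)
    {m : ℕ} (x : Pref X m) (hm : m < p) (z : X ⟨m, hm⟩) :
    partProd f (m + 1) (extPref x hm z)
      = f ⟨m, hm⟩ z (fun k hk => x k hk) * partProd f m x := by
  classical
  unfold partProd
  rw [← Finset.mul_prod_erase Finset.univ _ (Finset.mem_univ (⟨m, hm⟩ : Fin p))]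
  have h1 : (if h : ((⟨m, hm⟩ : Fin p) : ℕ) < m + 1 then
      f ⟨m, hm⟩ ((extPref x hm z) ⟨m, hm⟩ h)
        (fun k hk => (extPref x hm z) k (hk.trans h)) else 1)
      = f ⟨m, hm⟩ z (fun k hk => x k hk) := by
    rw [dif_pos (Nat.lt_succ_self m)]
    have hz : (extPref x hm z) ⟨m, hm⟩ (Nat.lt_succ_self m) = z := by
      rw [extPref, dif_neg (Nat.lt_irrefl m)]
      exact cast_eq _ z
    congr 1
    all_goals try (funext k hk; rw [extPref, dif_pos hk])
    all_goals exact hz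
  rw [h1]
  congr 1
  have h2 : ∀ j ∈ Finset.univ.erase (⟨m, hm⟩ : Fin p),
      (if h : (j : ℕ) < m + 1 then
        f j ((extPref x hm z) j h) (fun k hk => (extPref x hm z) k (hk.trans h)) else 1)
      = (if h : (j : ℕ) < m then f j (x j h) (fun k hk => x k (hk.trans h)) else 1) := by
    intro j hj
    have hjne : j ≠ ⟨m, hm⟩ := (Finset.mem_erase.mp hj).1
    have hjm : (j : ℕ) ≠ m := fun h => hjne (Fin.ext (by simp only [Fin.val_mk]; omega))
    by_cases hlt : (j : ℕ) < m
    · rw [dif_pos (by omega : (j : ℕ) < m + 1), dif_pos hlt]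
      congr 1
      · rw [extPref, dif_pos hlt]
      · funext k hk
        rw [extPref, dif_pos (hk.trans hlt)]
    · rw [dif_neg (by omega : ¬ (j : ℕ) < m + 1), dif_neg hlt]
  rw [Finset.prod_congr rfl h2]
  exact Finset.prod_erase Finset.univ (dif_neg (Nat.lt_irrefl m))

lemma prefProb_eq_partProd (f : (j : Fin p) → X j → Pref X j.1 → ℝ)
    (hsum : ∀ (j : Fin p) (pre : Pref X j.1), ∑ z : X j, f j z pre = 1) :
    ∀ (d m : ℕ), m + d = p → ∀ x : Pref X m,
      prefProb (prodP f) x = partProd f m x := by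
  intro d
  induction d with
  | zero =>
    intro m hm x
    have hpm : p ≤ m := by omega
    unfold prefProb
    refine (Finset.sum_eq_single_of_mem (fun j => x j (lt_of_lt_of_le j.isLt hpm))
      (Finset.mem_univ _) (fun b _ hb => if_neg (fun hA => hb
        (funext (fun j => hA j (lt_of_lt_of_le j.isLt hpm)))))).trans ?_
    rw [if_pos (show Agrees (fun j => x j (lt_of_lt_of_le j.isLt hpm)) x
      from fun j hj => rfl)]
    unfold prodP partProd
    exact Finset.prod_congr rfl
      (fun j _ => by rw [dif_pos (lt_of_lt_of_le j.isLt hpm)])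
  | succ d ih =>
    intro m hm x
    have hmp : m < p := by omega
    have hstep : prefProb (prodP f) x
        = ∑ z : X ⟨m, hmp⟩, prefProb (prodP f) (extPref x hmp z) := by
      unfold prefProb
      rw [Finset.sum_comm]
      apply Finset.sum_congr rfl
      intro y _
      simp only [agrees_extPref]
      by_cases hy : Agrees y x
      · simp [hy]
      · simp [hy]
    rw [hstep]
    have key : ∀ z : X ⟨m, hmp⟩, prefProb (prodP f) (extPref x hmp z)
        = f ⟨m, hmp⟩ z (fun k hk => x k hk) * partProd f m x := by
      intro z
      rw [ih (m + 1) (by omega) (extPref x hmp z), partProd_ext]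
    rw [Finset.sum_congr rfl (fun z _ => key z), ← Finset.sum_mul,
      hsum ⟨m, hmp⟩ (fun k hk => x k hk), one_mul]

omit [∀ j, Fintype (X j)] in
lemma partProd_pos (f : (j : Fin p) → X j → Pref X j.1 → ℝ)
    (hpos : ∀ (j : Fin p) (z : X j) (pre : Pref X j.1), 0 < f j z pre)
    (m : ℕ) (x : Pref X m) : 0 < partProd f m x := by
  apply Finset.prod_pos
  intro j _
  split
  · exact hpos _ _ _
  · exact one_pos

lemma condProb_prodP (f : (j : Fin p) → X j → Pref X j.1 → ℝ)
    (hsum : ∀ (j : Fin p) (pre : Pref X j.1), ∑ z : X j, f j z pre = 1)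
    (hpos : ∀ (j : Fin p) (z : X j) (pre : Pref X j.1), 0 < f j z pre)
    (i : Fin p) (x : Pref X i.1) (z : X i) :
    condProb (prodP f) i x z = f i z x := by
  have hi : (i : ℕ) < p := i.isLt
  have hnum : (∑ y : Cfg X, if Agrees y x ∧ y i = z then prodP f y else 0)
      = prefProb (prodP f) (extPref x hi z) := by
    unfold prefProb
    apply Finset.sum_congr rfl
    intro y _
    rw [agrees_extPref x hi z y]
    by_cases hc : Agrees y x ∧ y i = z
    · rw [if_pos hc]
      exact (if_pos hc).symm
    · rw [if_neg hc]
      exact (if_neg hc).symm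
  unfold condProb
  rw [hnum, prefProb_eq_partProd f hsum (p - (i.1 + 1)) (i.1 + 1) (by omega),
    prefProb_eq_partProd f hsum (p - i.1) i.1 (by omega), partProd_ext]
  have hpp : partProd f i.1 x ≠ 0 := ne_of_gt (partProd_pos f hpos i.1 x)
  rw [mul_div_assoc, div_self hpp, mul_one]

lemma sum_prodP (f : (j : Fin p) → X j → Pref X j.1 → ℝ)
    (hsum : ∀ (j : Fin p) (pre : Pref X j.1), ∑ z : X j, f j z pre = 1) :
    ∑ y : Cfg X, prodP f y = 1 := by
  have h1 := prefProb_eq_partProd f hsum p 0 (by omega)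
    (fun j h => absurd h (Nat.not_lt_zero _))
  have h2 : partProd f 0 (fun j h => absurd h (Nat.not_lt_zero (j : ℕ)))
      = (1 : ℝ) := by
    unfold partProd
    apply Finset.prod_eq_one
    intro j _
    rw [dif_neg (Nat.not_lt_zero _)]
  have h3 : prefProb (prodP f) (fun j h => absurd h (Nat.not_lt_zero (j : ℕ)))
      = ∑ y : Cfg X, prodP f y := by
    unfold prefProb
    apply Finset.sum_congr rfl
    intro y _
    rw [if_pos (show Agrees y (fun j h => absurd h (Nat.not_lt_zero (j : ℕ)))
      from fun j hj => absurd hj (Nat.not_lt_zero _))]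
  rw [← h3, h1, h2]

omit [∀ j, Fintype (X j)] in
lemma prodP_pos (f : (j : Fin p) → X j → Pref X j.1 → ℝ)
    (hpos : ∀ (j : Fin p) (z : X j) (pre : Pref X j.1), 0 < f j z pre)
    (y : Cfg X) : 0 < prodP f y :=
  Finset.prod_pos (fun _ _ => hpos _ _ _)

end Aux

section Main

variable {p : ℕ} {X : Fin p → Type} [∀ j, Fintype (X j)] {C : Type}

/-- The per-level conditionals of the staged distribution used in the minimality proof:
uniform at every level except `i`, where prefixes with the color of `x` get a
distribution tilted towards `z0`. -/
noncomputable def stagF (κ : (i : Fin p) → Pref X i.1 → C) (i : Fin p)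
    (x : Pref X i.1) (z0 : X i) : (j : Fin p) → X j → Pref X j.1 → ℝ :=
  fun j => if hj : j = i then
      (fun z pre => if κ i (hj ▸ pre) = κ i x then
        (2 * (Fintype.card (X i) : ℝ))⁻¹ + (if hj ▸ z = z0 then 1/2 else 0)
      else (Fintype.card (X i) : ℝ)⁻¹)
    else fun _ _ => (Fintype.card (X j) : ℝ)⁻¹

lemma stagF_eval_eq (κ : (i : Fin p) → Pref X i.1 → C) (i : Fin p)
    (x : Pref X i.1) (z0 : X i) (z : X i) (pre : Pref X i.1) :
    stagF κ i x z0 i z pre = if κ i pre = κ i x then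
        (2 * (Fintype.card (X i) : ℝ))⁻¹ + (if z = z0 then 1/2 else 0)
      else (Fintype.card (X i) : ℝ)⁻¹ := by
  unfold stagF
  rw [dif_pos rfl]

lemma stagF_eval_ne (κ : (i : Fin p) → Pref X i.1 → C) (i : Fin p)
    (x : Pref X i.1) (z0 : X i) {j : Fin p} (hj : j ≠ i) (z : X j) (pre : Pref X j.1) :
    stagF κ i x z0 j z pre = (Fintype.card (X j) : ℝ)⁻¹ := by
  unfold stagF
  rw [dif_neg hj]

lemma stagF_pos (κ : (i : Fin p) → Pref X i.1 → C) (i : Fin p)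
    (x : Pref X i.1) (z0 : X i) (h2 : ∀ j, 2 ≤ Fintype.card (X j)) :
    ∀ (j : Fin p) (z : X j) (pre : Pref X j.1), 0 < stagF κ i x z0 j z pre := by
  intro j z pre
  have hcard : ∀ j' : Fin p, (0 : ℝ) < (Fintype.card (X j') : ℝ) := by
    intro j'
    exact_mod_cast lt_of_lt_of_le (by norm_num) (h2 j')
  by_cases hj : j = i
  · subst hj
    rw [stagF_eval_eq]
    have h2n : (0 : ℝ) < (2 * (Fintype.card (X j) : ℝ))⁻¹ := by
      apply inv_pos.mpr; linarith [hcard j]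
    split
    · split <;> linarith
    · exact inv_pos.mpr (hcard j)
  · rw [stagF_eval_ne κ i x z0 hj]
    exact inv_pos.mpr (hcard j)

lemma stagF_sum (κ : (i : Fin p) → Pref X i.1 → C) (i : Fin p)
    (x : Pref X i.1) (z0 : X i) (h2 : ∀ j, 2 ≤ Fintype.card (X j)) :
    ∀ (j : Fin p) (pre : Pref X j.1), ∑ z : X j, stagF κ i x z0 j z pre = 1 := by
  intro j pre
  have hcard : ∀ j' : Fin p, ((Fintype.card (X j') : ℝ)) ≠ 0 := by
    intro j'
    have := h2 j'
    positivity
  by_cases hj : j = i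
  · subst hj
    rw [Finset.sum_congr rfl (fun z _ => stagF_eval_eq κ j x z0 z pre)]
    by_cases hc : κ j pre = κ j x
    · simp only [if_pos hc]
      rw [Finset.sum_add_distrib, Finset.sum_const, Finset.card_univ, nsmul_eq_mul]
      have hsingle : (∑ z : X j, if z = z0 then (1 : ℝ)/2 else 0) = 1/2 := by
        refine (Finset.sum_eq_single_of_mem z0 (Finset.mem_univ _)
          (fun b _ hb => if_neg hb)).trans ?_
        rw [if_pos rfl]
      rw [hsingle]
      have h0 := hcard j
      field_simp
      ring
    · simp only [if_neg hc]
      rw [Finset.sum_const, Finset.card_univ, nsmul_eq_mul,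
        mul_inv_cancel₀ (hcard j)]
  · rw [Finset.sum_congr rfl (fun z _ => stagF_eval_ne κ i x z0 hj z pre),
      Finset.sum_const, Finset.card_univ, nsmul_eq_mul, mul_inv_cancel₀ (hcard j)]

end Main


/-- Minimality of `G_κ`: if `G` is any DAG on `{1, …, p}` all of whose
edges point from lower to higher indices (so `1, …, p` is a topological order) and
`M_κ ⊆ M_G`, then every edge of `G_κ` is an edge of `G`. -/
theorem stagingEdge_minimal {p : ℕ} (hp : 1 ≤ p) (X : Fin p → Type)
    [∀ j, Fintype (X j)] (h2 : ∀ j, 2 ≤ Fintype.card (X j))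
    {C : Type} (κ : (i : Fin p) → Pref X i.1 → C)
    (E : Fin p → Fin p → Prop) (hE : ∀ k i : Fin p, E k i → (k : ℕ) < (i : ℕ))
    (hsub : ∀ P : Cfg X → ℝ, MemStagedModel κ P → MemBNModel E P) :
    ∀ k i : Fin p, stagingEdge κ k i → E k i := by
  intro k i hedge
  obtain ⟨hki, x, x', hagree, hcol⟩ := hedge
  by_contra hEki
  obtain ⟨z0⟩ : Nonempty (X i) := Fintype.card_pos_iff.mp (by have := h2 i; omega)
  set f := stagF κ i x z0 with hf
  have hsumf := stagF_sum κ i x z0 h2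
  have hposf := stagF_pos κ i x z0 h2
  -- the staged distribution
  have hstaged : MemStagedModel κ (prodP f) := by
    refine ⟨prodP_pos f hposf, sum_prodP f hsumf, ?_⟩
    intro i' _ x1 x2 hcolor z
    rw [condProb_prodP f hsumf hposf, condProb_prodP f hsumf hposf]
    by_cases hj : i' = i
    · subst hj
      rw [hf, stagF_eval_eq, stagF_eval_eq, hcolor]
    · rw [hf, stagF_eval_ne κ i x z0 hj, stagF_eval_ne κ i x z0 hj]
  obtain ⟨-, -, g, hg01, hgsum, hgfact⟩ := hsub (prodP f) hstaged
  -- the BN representation gives another product form for the same P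
  set f' : (j : Fin p) → X j → Pref X j.1 → ℝ :=
    fun j z pre => g j z (fun k hk => pre k (hE k j hk)) with hf'
  have hPP : prodP f' = prodP f := by
    funext y
    exact (hgfact y).symm
  have hsumf' : ∀ (j : Fin p) (pre : Pref X j.1), ∑ z : X j, f' j z pre = 1 :=
    fun j pre => hgsum j _
  have hposf' : ∀ (j : Fin p) (z : X j) (pre : Pref X j.1), 0 < f' j z pre :=
    fun j z pre => (hg01 j z _).1
  -- compute the conditional at i given x and x' in two ways
  have hc1 : f i z0 x = f' i z0 x := by
    rw [← condProb_prodP f hsumf hposf i x z0, ← condProb_prodP f' hsumf' hposf' i x z0,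
      hPP]
  have hc1' : f i z0 x' = f' i z0 x' := by
    rw [← condProb_prodP f hsumf hposf i x' z0, ← condProb_prodP f' hsumf' hposf' i x' z0,
      hPP]
  have hpar : (fun (k' : Fin p) (hk : E k' i) => x k' (hE k' i hk))
      = fun (k' : Fin p) (hk : E k' i) => x' k' (hE k' i hk) := by
    funext k' hk
    refine hagree k' (hE k' i hk) ?_
    rintro rfl
    exact hEki hk
  have hfeq : f i z0 x = f i z0 x' := by
    rw [hc1, hc1', hf']
    simp only []
    rw [hpar]
  rw [hf, stagF_eval_eq, stagF_eval_eq, if_pos rfl, if_pos rfl,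
    if_neg (fun h => hcol h.symm)] at hfeq
  have hn2 : (2 : ℝ) ≤ (Fintype.card (X i) : ℝ) := by exact_mod_cast h2 i
  have hinv : ((Fintype.card (X i) : ℝ))⁻¹ ≤ 1/2 := by
    rw [inv_le_comm₀ (by linarith) (by norm_num)]
    linarith
  have hpos2 : (0 : ℝ) < (2 * (Fintype.card (X i) : ℝ))⁻¹ := by
    apply inv_pos.mpr; linarith
  linarith
end

section
/- Let G be a DAG on {1, …, p} all of whose edges (j, i) satisfy j < i, let κ^G be its induced staging and let G_{κ^G} be the DAG constructed from the staging κ^G. Then the staged tree model of κ^G coincides with the Bayesian network model of the reconstructed DAG: M_{κ^G} = M_{G_{κ^G}}. -/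
/-!
For a positive mass function the chain rule writes `P` as the product of the conditionals
`P(X_i | X_{<i})`. In the staged tree model of `κ^G` these conditionals depend only on the
parent coordinates of `i`, so they are admissible Bayesian-network factors. Conversely, if
`P = ∏ g_i` with normalized factors, summing out the coordinates after a prefix shows that
the marginal of the prefix is the partial product of the first factors; hence
`P(X_i | X_{<i}) = g_i`, which depends only on the parents. Finally, the reconstructed DAG
`G_{κ^G}` is `G` itself: since every `X_k` has at least two values, changing a parent coordinate
changes the color.
-/

open scoped Classical

open Finset

section StagedTrees

variable {p : ℕ} {X : Fin p → Type}

namespace Pref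

def snoc (i : Fin p) (x : Pref X i.1) (z : X i) : Pref X (i.1 + 1) :=
  fun j h => if h' : (j : ℕ) < i.1 then x j h'
    else cast (congrArg X (Fin.eq_of_val_eq (by omega) : j = i)).symm z

lemma snoc_of_lt (i : Fin p) (x : Pref X i.1) (z : X i) {j : Fin p}
    (h : (j : ℕ) < i.1 + 1) (h' : (j : ℕ) < i.1) : snoc i x z j h = x j h' :=
  dif_pos h'

@[simp]
lemma snoc_self (i : Fin p) (x : Pref X i.1) (z : X i) (h : (i : ℕ) < i.1 + 1) :
    snoc i x z i h = z := by
  simp [snoc]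

lemma agrees_snoc_iff (i : Fin p) (x : Pref X i.1) (z : X i) (y : Cfg X) :
    Agrees y (snoc i x z) ↔ Agrees y x ∧ y i = z := by
  constructor
  · intro hy
    exact ⟨fun j h => by rw [hy j (by omega), snoc_of_lt i x z _ h],
      by rw [hy i (by omega), snoc_self]⟩
  · rintro ⟨hx, hz⟩ j h
    by_cases h' : (j : ℕ) < i.1
    · rw [snoc_of_lt i x z h h']; exact hx j h'
    · obtain rfl : j = i := Fin.eq_of_val_eq (by omega)
      rw [snoc_self]; exact hz

end Pref

def Cfg.trunc (y : Cfg X) (n : ℕ) : Pref X n := fun j _ => y j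

lemma Cfg.trunc_succ (y : Cfg X) (i : Fin p) :
    y.trunc (i.1 + 1) = Pref.snoc i (y.trunc i.1) (y i) := by
  funext j h
  by_cases h' : (j : ℕ) < i.1
  · rw [Pref.snoc_of_lt i _ _ h h']; rfl
  · obtain rfl : j = i := Fin.eq_of_val_eq (by omega)
    rw [Pref.snoc_self]; rfl

section prefProb

variable [∀ j, Fintype (X j)]

lemma prefProb_snoc (P : Cfg X → ℝ) (i : Fin p) (x : Pref X i.1) (z : X i) :
    prefProb P (Pref.snoc i x z) = ∑ y : Cfg X, if Agrees y x ∧ y i = z then P y else 0 := by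
  simp only [prefProb, Pref.agrees_snoc_iff]

lemma condProb_eq_div (P : Cfg X → ℝ) (i : Fin p) (x : Pref X i.1) (z : X i) :
    condProb P i x z = prefProb P (Pref.snoc i x z) / prefProb P x := by
  rw [condProb, prefProb_snoc]

lemma prefProb_eq_sum_snoc (P : Cfg X → ℝ) (i : Fin p) (x : Pref X i.1) :
    prefProb P x = ∑ z : X i, prefProb P (Pref.snoc i x z) := by
  simp only [prefProb_snoc, ite_and]
  rw [sum_comm, prefProb]
  exact sum_congr rfl fun y _ => by split_ifs <;> simp

lemma prefProb_zero (P : Cfg X → ℝ) (x : Pref X 0) : prefProb P x = ∑ y, P y :=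
  sum_congr rfl fun _ _ => if_pos fun _ h => absurd h (Nat.not_lt_zero _)

lemma prefProb_full (P : Cfg X → ℝ) (x : Pref X p) : prefProb P x = P (fun j => x j j.2) := by
  have hx : ∀ y : Cfg X, Agrees y x ↔ y = fun j => x j j.2 :=
    fun y => ⟨fun h => funext fun j => h j j.2, by rintro rfl j h; rfl⟩
  simp only [prefProb, hx, sum_ite_eq', mem_univ, if_true]

lemma prefProb_pos [∀ j, Nonempty (X j)] {P : Cfg X → ℝ} (hP : ∀ y, 0 < P y) {n : ℕ}
    (x : Pref X n) : 0 < prefProb P x := by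
  let y : Cfg X := fun j => if h : (j : ℕ) < n then x j h else Classical.arbitrary _
  have hy : Agrees y x := fun j h => dif_pos h
  refine sum_pos' (fun y' _ => ?_) ⟨y, mem_univ _, by rw [if_pos hy]; exact hP y⟩
  split_ifs
  exacts [(hP y').le, le_rfl]

lemma sum_condProb [∀ j, Nonempty (X j)] {P : Cfg X → ℝ} (hP : ∀ y, 0 < P y)
    (i : Fin p) (x : Pref X i.1) : ∑ z, condProb P i x z = 1 := by
  simp only [condProb_eq_div, ← sum_div, ← prefProb_eq_sum_snoc]
  exact div_self (prefProb_pos hP x).ne'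

lemma condProb_mem_Ioo [∀ j, Nonempty (X j)] {i : Fin p} [Nontrivial (X i)] {P : Cfg X → ℝ}
    (hP : ∀ y, 0 < P y) (x : Pref X i.1) (z : X i) :
    condProb P i x z ∈ Set.Ioo (0 : ℝ) 1 := by
  have hx := prefProb_pos hP x
  rw [condProb_eq_div]
  refine ⟨div_pos (prefProb_pos hP _) hx, ?_⟩
  rw [div_lt_one hx, prefProb_eq_sum_snoc P i x]
  obtain ⟨z', hz'⟩ := exists_ne z
  exact single_lt_sum hz' (mem_univ _) (mem_univ _) (prefProb_pos hP _)
    fun _ _ _ => (prefProb_pos hP _).le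

lemma prod_condProb_trunc [∀ j, Nonempty (X j)] {P : Cfg X → ℝ} (hP : ∀ y, 0 < P y)
    (hsum : ∑ y, P y = 1) (y : Cfg X) :
    ∏ i : Fin p, condProb P i (y.trunc i.1) (y i) = P y := by
  let s : ℕ → ℝ := fun n => prefProb P (y.trunc n)
  have hfactor : ∀ i : Fin p, condProb P i (y.trunc i.1) (y i) = s (i + 1) / s i := by
    intro i
    rw [condProb_eq_div, ← Cfg.trunc_succ]
  rw [prod_congr rfl fun i _ => hfactor i,
    Fin.prod_univ_eq_prod_range (fun k => s (k + 1) / s k)]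
  refine (prod_range_induction _ s (by simp only [s, prefProb_zero, hsum]) p fun k _ => ?_).trans
    (prefProb_full P _)
  rw [mul_div_cancel₀ _ (prefProb_pos hP _).ne']

end prefProb

lemma Fin.prod_dite_lt_succ {M : Type*} [CommMonoid M] (i : Fin p)
    (F : (j : Fin p) → (j : ℕ) < i.1 + 1 → M) :
    ∏ j : Fin p, (if h : (j : ℕ) < i.1 + 1 then F j h else 1)
      = (∏ j : Fin p, if h : (j : ℕ) < i.1 then F j (Nat.lt_succ_of_lt h) else 1)
        * F i (Nat.lt_succ_self _) := by
  have hsplit : ∀ j : Fin p, (if h : (j : ℕ) < i.1 + 1 then F j h else 1)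
      = (if h : (j : ℕ) < i.1 then F j (Nat.lt_succ_of_lt h) else 1)
        * (if h : j = i then F j (h ▸ Nat.lt_succ_self _) else 1) := by
    intro j
    rcases lt_trichotomy (j : ℕ) i with hlt | heq | hgt
    · simp [hlt, Nat.lt_succ_of_lt hlt, Fin.ne_of_lt hlt]
    · obtain rfl : j = i := Fin.eq_of_val_eq heq
      simp
    · simp [show ¬ (j : ℕ) < i.1 + 1 by omega, show ¬ (j : ℕ) < i.1 by omega,
        (Fin.ne_of_lt hgt).symm]
  rw [prod_congr rfl fun j _ => hsplit j, prod_mul_distrib, prod_dite_eq']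
  simp

section Factorization

variable [∀ j, Fintype (X j)] {E : Fin p → Fin p → Prop}
  (hE : ∀ k i : Fin p, E k i → (k : ℕ) < (i : ℕ))
  (g : (i : Fin p) → X i → ((j : Fin p) → E j i → X j) → ℝ)

noncomputable def partialProd {n : ℕ} (x : Pref X n) : ℝ :=
  ∏ j : Fin p, if h : (j : ℕ) < n then
    g j (x j h) (fun k hk => x k ((hE k j hk).trans h)) else 1

omit [∀ j, Fintype (X j)] in
lemma partialProd_snoc (i : Fin p) (x : Pref X i.1) (z : X i) :
    partialProd hE g (Pref.snoc i x z)
      = partialProd hE g x * g i z (fun k hk => x k (hE k i hk)) := by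
  rw [partialProd, Fin.prod_dite_lt_succ, Pref.snoc_self]
  congr 1
  · refine prod_congr rfl fun j _ => dite_congr rfl (fun h => ?_) fun _ => rfl
    rw [Pref.snoc_of_lt i x z _ h]
    congr 1 with k hk
    exact Pref.snoc_of_lt i x z _ ((hE k j hk).trans h)
  · congr 1 with k hk
    exact Pref.snoc_of_lt i x z _ (hE k i hk)

variable {P : Cfg X → ℝ} (hg1 : ∀ i par, ∑ z, g i z par = 1)
  (hP : ∀ y, P y = ∏ i, g i (y i) (fun j _ => y j))
include hg1 hP

lemma prefProb_eq_partialProd {n : ℕ} (hn : n ≤ p) (x : Pref X n) :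
    prefProb P x = partialProd hE g x := by
  induction hn using Nat.decreasingInduction with
  | self =>
    rw [prefProb_full, hP, partialProd]
    exact prod_congr rfl fun j _ => by rw [dif_pos j.2]
  | of_succ n hn ih =>
    let i : Fin p := ⟨n, hn⟩
    calc prefProb P x = ∑ z, prefProb P (Pref.snoc i x z) := prefProb_eq_sum_snoc P i x
      _ = ∑ z, partialProd hE g x * g i z (fun k hk => x k (hE k i hk)) := by
        simp only [ih, partialProd_snoc]
      _ = partialProd hE g x := by rw [← mul_sum, hg1, mul_one]

lemma condProb_eq_of_factorization (hg0 : ∀ i z par, 0 < g i z par) (i : Fin p)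
    (x : Pref X i.1) (z : X i) : condProb P i x z = g i z (fun k hk => x k (hE k i hk)) := by
  have hx : partialProd hE g x ≠ 0 :=
    (prod_pos fun j _ => by split_ifs; exacts [hg0 _ _ _, one_pos]).ne'
  rw [condProb_eq_div, prefProb_eq_partialProd hE g hg1 hP i.2 _,
    prefProb_eq_partialProd hE g hg1 hP i.2.le _, partialProd_snoc, mul_div_cancel_left₀ _ hx]

end Factorization

section InducedStaging

variable {E : Fin p → Fin p → Prop} (hE : ∀ k i : Fin p, E k i → (k : ℕ) < (i : ℕ))

lemma indStaging_eq_iff {i : Fin p} {x x' : Pref X i.1} :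
    indStaging E hE i x = indStaging E hE i x' ↔
      ∀ k (hk : E k i), x k (hE k i hk) = x' k (hE k i hk) := by
  simp only [indStaging, Sigma.mk.injEq, heq_eq_eq, true_and, funext_iff]

lemma stagingEdge_indStaging [∀ j, Nontrivial (X j)] :
    stagingEdge (indStaging (X := X) E hE) = E := by
  ext k i
  constructor
  · rintro ⟨-, x, x', hxx', hne⟩
    by_contra hk
    exact hne <| (indStaging_eq_iff hE).2 fun j hj => hxx' j _ fun hjk => hk (hjk ▸ hj)
  · intro hk
    let y : Cfg X := fun _ => Classical.arbitrary _
    obtain ⟨z, hz⟩ := exists_ne (y k)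
    refine ⟨hE k i hk, y.trunc i, Cfg.trunc (Function.update y k z) i,
      fun j _ hj => (Function.update_of_ne hj z y).symm, fun h => hz ?_⟩
    simpa [Cfg.trunc] using ((indStaging_eq_iff hE).1 h k hk).symm

variable [∀ j, Fintype (X j)] {P : Cfg X → ℝ}

lemma condProb_congr_of_memStagedModel (hP : MemStagedModel (indStaging E hE) P) {i : Fin p}
    {x x' : Pref X i.1} (hx : ∀ k (hk : E k i), x k (hE k i hk) = x' k (hE k i hk)) :
    condProb P i x = condProb P i x' := by
  rcases Nat.eq_zero_or_pos i.1 with hi | hi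
  · obtain rfl : x = x' := funext fun j => funext fun h => absurd h (by omega)
    rfl
  · exact funext (hP.2.2 i hi x x' ((indStaging_eq_iff hE).2 hx))

lemma memBNModel_of_memStagedModel [∀ j, Nontrivial (X j)]
    (hP : MemStagedModel (indStaging E hE) P) : MemBNModel E P := by
  let extend (i : Fin p) (par : (j : Fin p) → E j i → X j) : Pref X i.1 :=
    fun j _ => if h : E j i then par j h else Classical.arbitrary _
  refine ⟨fun y => (hP.1 y).le, hP.2.1, fun i z par => condProb P i (extend i par) z,
    fun i z _ => condProb_mem_Ioo hP.1 _ z, fun i _ => sum_condProb hP.1 i _, fun y => ?_⟩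
  rw [← prod_condProb_trunc hP.1 hP.2.1 y]
  refine prod_congr rfl fun i _ => congrFun (condProb_congr_of_memStagedModel hE hP ?_) (y i)
  intro k hk
  simp [extend, Cfg.trunc, hk]

lemma memStagedModel_of_memBNModel (hP : MemBNModel E P) :
    MemStagedModel (indStaging E hE) P := by
  obtain ⟨-, hsum, g, hg, hg1, hfac⟩ := hP
  have hg0 : ∀ i z par, 0 < g i z par := fun i z par => (hg i z par).1
  refine ⟨fun y => hfac y ▸ prod_pos fun i _ => hg0 _ _ _, hsum, fun i _ x x' hxx' z => ?_⟩
  rw [condProb_eq_of_factorization hE g hg1 hfac hg0,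
    condProb_eq_of_factorization hE g hg1 hfac hg0]
  exact congrArg (g i z) (funext fun k => funext ((indStaging_eq_iff hE).1 hxx' k))

lemma memStagedModel_indStaging_iff [∀ j, Nontrivial (X j)] :
    MemStagedModel (indStaging E hE) P ↔ MemBNModel E P :=
  ⟨memBNModel_of_memStagedModel hE, memStagedModel_of_memBNModel hE⟩

end InducedStaging

end StagedTrees

theorem stagedModel_indStaging_eq_bnModel_reconstructed_general {p : ℕ}
    (X : Fin p → Type) [∀ j, Fintype (X j)] (h2 : ∀ j, 2 ≤ Fintype.card (X j))
    (E : Fin p → Fin p → Prop) (hE : ∀ k i : Fin p, E k i → (k : ℕ) < (i : ℕ)) :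
    ∀ P : Cfg X → ℝ,
      MemStagedModel (indStaging (X := X) E hE) P ↔
        MemBNModel (stagingEdge (indStaging (X := X) E hE)) P := by
  have : ∀ j, Nontrivial (X j) := fun j => Fintype.one_lt_card_iff_nontrivial.mp (h2 j)
  intro P
  rw [stagingEdge_indStaging]
  exact memStagedModel_indStaging_iff hE

/-- For a DAG `G` with induced staging `κ^G`, the staged tree model of
`κ^G` coincides with the Bayesian network model of the reconstructed DAG `G_{κ^G}`:
`M_{κ^G} = M_{G_{κ^G}}`. -/
theorem stagedModel_indStaging_eq_bnModel_reconstructed {p : ℕ} (hp : 1 ≤ p)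
    (X : Fin p → Type) [∀ j, Fintype (X j)] (h2 : ∀ j, 2 ≤ Fintype.card (X j))
    (E : Fin p → Fin p → Prop) (hE : ∀ k i : Fin p, E k i → (k : ℕ) < (i : ℕ)) :
    ∀ P : Cfg X → ℝ,
      MemStagedModel (indStaging (X := X) E hE) P ↔
        MemBNModel (stagingEdge (indStaging (X := X) E hE)) P :=
  stagedModel_indStaging_eq_bnModel_reconstructed_general X h2 E hE
end
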